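/- Converse action bound in the canonical frame: Let H : ℝ → B(ℋ) be a locally integrable map with H(t) self-adjoint for every t, let U be the propagator generated by H, and let S(t) = ∫₀ᵗ H(s) ds be the integral action. Then for every t ≥ 0: ‖S‖_{∞,t} ≤ (1 + ‖H‖_{1,t}) · ‖U − 1‖_{∞,t}. -/

import Mathlib

open MeasureTheory intervalIntegral

variable {E : Type*} [NormedAddCommGroup E] [InnerProductSpace ℂ E] [CompleteSpace E]
  [TopologicalSpace.SeparableSpace E]

/-- `U` is the propagator generated by the time-dependent Hamiltonian `H`:
the norm-continuous solution of the Volterra integral equation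
`U(t) = 1 − i ∫₀ᵗ H(s) U(s) ds`. -/
def IsPropagator (H U : ℝ → E →L[ℂ] E) : Prop :=
  Continuous U ∧ ∀ t : ℝ, U t = 1 - Complex.I • ∫ s in (0:ℝ)..t, (H s).comp (U s)

/-- Converse action bound in the canonical frame: with `S(t) = ∫₀ᵗ H(s) ds`,
`‖S‖_{∞,t} ≤ (1 + ‖H‖_{1,t}) ‖U − 1‖_{∞,t}` for all `t ≥ 0`. -/
theorem converse_action_bound
    (H U : ℝ → E →L[ℂ] E)
    (hHint : ∀ a b : ℝ, IntervalIntegrable H volume a b)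
    (hHsa : ∀ t : ℝ, IsSelfAdjoint (H t))
    (hU : IsPropagator H U)
    (S : ℝ → E →L[ℂ] E)
    (hS : ∀ t : ℝ, S t = ∫ s in (0:ℝ)..t, H s) :
    ∀ t : ℝ, 0 ≤ t →
      (⨆ s : Set.Icc (0:ℝ) t, ‖S s‖)
        ≤ (1 + ∫ s in (0:ℝ)..t, ‖H s‖) * (⨆ s : Set.Icc (0:ℝ) t, ‖U s - 1‖) := by
  obtain ⟨hUc, hUeq⟩ := hU
  intro t ht
  haveI : Nonempty (Set.Icc (0:ℝ) t) := ⟨⟨0, le_refl 0, ht⟩⟩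
  set M := ⨆ s : Set.Icc (0:ℝ) t, ‖U s - 1‖ with hMdef
  have hcont : Continuous fun s : ℝ => ‖U s - 1‖ := (hUc.sub continuous_const).norm
  have hbdd : BddAbove (Set.range fun s : Set.Icc (0:ℝ) t => ‖U (s:ℝ) - 1‖) := by
    have h1 : Set.range (fun s : Set.Icc (0:ℝ) t => ‖U (s:ℝ) - 1‖)
        = (fun s => ‖U s - 1‖) '' Set.Icc 0 t := by
      have := Set.range_comp (fun s : ℝ => ‖U s - 1‖) (Subtype.val : Set.Icc (0:ℝ) t → ℝ)
      rw [Subtype.range_coe] at this; exact this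
    rw [h1]
    exact isCompact_Icc.bddAbove_image hcont.continuousOn
  have hMle : ∀ s ∈ Set.Icc (0:ℝ) t, ‖U s - 1‖ ≤ M := fun s hs =>
    le_ciSup hbdd (⟨s, hs⟩ : Set.Icc (0:ℝ) t)
  have hM0 : 0 ≤ M := le_trans (norm_nonneg _) (hMle 0 ⟨le_rfl, ht⟩)
  have hUV : ∀ a b : ℝ, IntervalIntegrable (fun r => H r * (U r - 1)) volume a b :=
    fun a b => (hHint a b).mul_continuousOn ((hUc.sub continuous_const).continuousOn)
  have hHUint : ∀ a b : ℝ, IntervalIntegrable (fun r => H r * U r) volume a b :=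
    fun a b => (hHint a b).mul_continuousOn hUc.continuousOn
  apply ciSup_le
  rintro ⟨s, hs0, hst⟩
  simp only
  -- key identity
  have h1 : (∫ r in (0:ℝ)..s, H r * U r) = Complex.I • (U s - 1) := by
    have h2 := hUeq s
    have h3 : U s - 1 = -(Complex.I • ∫ r in (0:ℝ)..s, (H r).comp (U r)) := by
      rw [h2]; abel
    have h4 : (fun r => (H r).comp (U r)) = fun r => H r * U r := rfl
    rw [h4] at h3
    rw [h3, smul_neg, smul_smul, Complex.I_mul_I, neg_smul, one_smul, neg_neg]
  have hkey : S s = Complex.I • (U s - 1) - ∫ r in (0:ℝ)..s, H r * (U r - 1) := by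
    rw [hS s, ← h1, ← intervalIntegral.integral_sub (hHUint 0 s) (hUV 0 s)]
    congr 1
    funext r
    simp [mul_sub]
  have hnormI : ‖Complex.I • (U s - 1)‖ = ‖U s - 1‖ := by
    rw [norm_smul, Complex.norm_I, one_mul]
  have hint1 : ‖∫ r in (0:ℝ)..s, H r * (U r - 1)‖ ≤ ∫ r in (0:ℝ)..s, ‖H r‖ * M := by
    refine le_trans (intervalIntegral.norm_integral_le_integral_norm hs0) ?_
    apply intervalIntegral.integral_mono_on hs0 (hUV 0 s).norm
      ((hHint 0 s).norm.mul_const M)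
    intro r hr
    calc ‖H r * (U r - 1)‖ ≤ ‖H r‖ * ‖U r - 1‖ := norm_mul_le _ _
      _ ≤ ‖H r‖ * M := by
          exact mul_le_mul_of_nonneg_left (hMle r ⟨hr.1, hr.2.trans hst⟩) (norm_nonneg _)
  have hint2 : (∫ r in (0:ℝ)..s, ‖H r‖ * M) ≤ ∫ r in (0:ℝ)..t, ‖H r‖ * M := by
    apply intervalIntegral.integral_mono_interval le_rfl hs0 hst
    · filter_upwards with r
      exact mul_nonneg (norm_nonneg _) hM0
    · exact (hHint 0 t).norm.mul_const M
  have hint3 : (∫ r in (0:ℝ)..t, ‖H r‖ * M) = (∫ r in (0:ℝ)..t, ‖H r‖) * M :=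
    intervalIntegral.integral_mul_const M _
  calc ‖S s‖ ≤ ‖Complex.I • (U s - 1)‖ + ‖∫ r in (0:ℝ)..s, H r * (U r - 1)‖ := by
        rw [hkey]; exact norm_sub_le _ _
    _ ≤ M + (∫ r in (0:ℝ)..t, ‖H r‖) * M := by
        rw [hnormI]
        exact add_le_add (hMle s ⟨hs0, hst⟩) ((hint1.trans hint2).trans_eq hint3)
    _ = (1 + ∫ r in (0:ℝ)..t, ‖H r‖) * M := by ring
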